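/- arXiv:2010.04756 — 2 statements merged into one kernel-verified Lean document; each statement's English description precedes it below -/
import Mathlib

section
/- The two-stage Rosenbrock scheme ROS2 is second-order consistent for any choice of Â: for the ODE y' = f(t,y) with f smooth, the one-step update y_{n+1} = y_n + (3/2)Δt k₁ + (1/2)Δt k₂, where (I − γΔt Â)k₁ = f(t_n, y_n) and (I − γΔt Â)k₂ = f(t_{n+1}, y_n + Δt k₁) − 2k₁, satisfies ‖y(t_n + Δt) − y_{n+1}‖ = O(Δt³) as Δt → 0 whenever y_n = y(t_n), provided I − γΔt Â is invertible. -/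
/-!
With `F = f(tₙ, yₙ)`, `w = Df(tₙ, yₙ)(1, F) = y''(tₙ)` and `A = γ Â`, the exact solution satisfies
`y(tₙ + h) = yₙ + h F + (h²/2) w + O(h³)`. The resolvent identity `k = u + h A k` for
`k = (1 - h A)⁻¹ u` gives `k₁ = F + h A F + O(h²)`, and, since `f(tₙ + h, yₙ + h k₁) = F + h w + O(h²)`,
`k₂ = -F + h (w - 3 A F) + O(h²)`. In `(3/2) h k₁ + (1/2) h k₂ = h F + (h²/2) w + O(h³)` the
`A`-terms cancel, whatever `Â` is.

Every remainder estimate comes from the mean value inequality: a function whose derivative is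
`O(‖x‖ⁿ)` near `0` differs from its value at `0` by `O(‖x‖ⁿ⁺¹)`.
-/

open Asymptotics Filter Topology
open scoped Matrix

section NormedSpace

variable {E F : Type*} [NormedAddCommGroup E] [NormedSpace ℝ E]
  [NormedAddCommGroup F] [NormedSpace ℝ F]

theorem isBigO_norm_pow_succ_of_hasFDerivAt {φ : E → F} {φ' : E → E →L[ℝ] F} {n : ℕ}
    (hφ : ∀ᶠ x in 𝓝 0, HasFDerivAt φ (φ' x) x) (hφ' : φ' =O[𝓝 0] fun x => ‖x‖ ^ n) :
    (fun x => φ x - φ 0) =O[𝓝 0] fun x => ‖x‖ ^ (n + 1) := by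
  obtain ⟨C, hC₀, hC⟩ := hφ'.exists_nonneg
  obtain ⟨ε, hε, hball⟩ := Metric.eventually_nhds_iff_ball.1 (hφ.and hC.bound)
  refine IsBigO.of_bound C ?_
  filter_upwards [Metric.ball_mem_nhds 0 hε] with x hx
  have hsub : Metric.closedBall (0 : E) ‖x‖ ⊆ Metric.ball 0 ε :=
    Metric.closedBall_subset_ball (by simpa using hx)
  have hbound : ∀ z ∈ Metric.closedBall (0 : E) ‖x‖, ‖φ' z‖ ≤ C * ‖x‖ ^ n := fun z hz => by
    have hz' : ‖z‖ ≤ ‖x‖ := by simpa using hz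
    calc ‖φ' z‖ ≤ C * ‖‖z‖ ^ n‖ := (hball z (hsub hz)).2
      _ ≤ C * ‖x‖ ^ n := by rw [norm_pow, norm_norm]; gcongr
  have := (convex_closedBall (0 : E) ‖x‖).norm_image_sub_le_of_norm_hasFDerivWithin_le
    (fun z hz => (hball z (hsub hz)).1.hasFDerivWithinAt) hbound
    (Metric.mem_closedBall_self (norm_nonneg x)) (mem_closedBall_zero_iff.2 le_rfl)
  simpa [pow_succ, mul_assoc] using this

theorem isBigO_pow_succ_of_hasDerivAt {φ φ' : ℝ → F} {n : ℕ}
    (hφ : ∀ᶠ x in 𝓝 0, HasDerivAt φ (φ' x) x) (hφ' : φ' =O[𝓝 0] fun x => x ^ n) :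
    (fun x => φ x - φ 0) =O[𝓝 0] fun x => x ^ (n + 1) := by
  have hφ'' : (fun x => (1 : ℝ →L[ℝ] ℝ).smulRight (φ' x)) =O[𝓝 0] fun x => ‖x‖ ^ n := by
    simpa [ContinuousLinearMap.norm_smulRight_apply, ← isBigO_norm_left] using hφ'.norm_right
  refine (isBigO_norm_right (g' := fun x : ℝ => x ^ (n + 1))).1 ?_
  simpa using isBigO_norm_pow_succ_of_hasFDerivAt (hφ.mono fun x hx => hx.hasFDerivAt) hφ''

theorem ContDiffAt.isBigO_sub_sub_fderiv {Φ : E → F} {p : E} (hΦ : ContDiffAt ℝ 2 Φ p) :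
    (fun q => Φ (p + q) - fderiv ℝ Φ p q - Φ p) =O[𝓝 0] fun q => ‖q‖ ^ 2 := by
  have hshift : Tendsto (fun q : E => p + q) (𝓝 0) (𝓝 p) := by
    simpa using tendsto_const_nhds.add (tendsto_id (x := 𝓝 (0 : E)))
  have hdiff : ∀ᶠ q in 𝓝 (0 : E), DifferentiableAt ℝ Φ (p + q) :=
    hshift.eventually <| (hΦ.eventually (by simp)).mono fun x hx =>
      hx.differentiableAt (by norm_num)
  have hD : (fun q => fderiv ℝ Φ (p + q) - fderiv ℝ Φ p) =O[𝓝 0] fun q => ‖q‖ ^ 1 := by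
    have := ((hΦ.fderiv_right (m := 1) (by norm_num)).differentiableAt one_ne_zero).isBigO_sub
    simpa [Function.comp_def] using (this.comp_tendsto hshift).norm_right
  simpa using isBigO_norm_pow_succ_of_hasFDerivAt (φ := fun q => Φ (p + q) - fderiv ℝ Φ p q)
    (hdiff.mono fun q hq =>
      ((hasFDerivAt_comp_add_left p).2 hq.hasFDerivAt).sub (fderiv ℝ Φ p).hasFDerivAt) hD

theorem Asymptotics.IsBigO.id_smul_pow_succ {l : Filter ℝ} {X : ℝ → E} {m : ℕ} (hX : X =O[l] fun h => h ^ m) :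
    (fun h => h • X h) =O[l] fun h => h ^ (m + 1) :=
  ((isBigO_refl (fun h : ℝ => h) l).smul hX).congr_right fun h => by simp [pow_succ']

theorem isBigO_id_of_sub_smul {X : ℝ → E} {v : E}
    (hX : (fun s => X s - s • v) =O[𝓝 0] fun s => s ^ 2) : X =O[𝓝 0] fun s => s := by
  have hsq : (fun s : ℝ => s ^ 2) =O[𝓝 0] fun s => s := by
    simpa using (isLittleO_pow_pow (𝕜 := ℝ) one_lt_two).isBigO
  have hlin : (fun s : ℝ => s • v) =O[𝓝 0] fun s => s :=
    .of_bound ‖v‖ (.of_forall fun s => by rw [norm_smul, mul_comm])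
  simpa using (hX.trans hsq).add hlin

theorem ContDiffAt.isBigO_sub_sub_fderiv_along {f : ℝ → E → F} {t : ℝ} {x v : E} {z : ℝ → E}
    (hf : ContDiffAt ℝ 2 (Function.uncurry f) (t, x))
    (hz : (fun s => z s - s • v) =O[𝓝 0] fun s => s ^ 2) :
    (fun s => f (t + s) (x + z s) - f t x - s • fderiv ℝ (Function.uncurry f) (t, x) (1, v))
      =O[𝓝 0] fun s => s ^ 2 := by
  set D := fderiv ℝ (Function.uncurry f) (t, x)
  have hq : (fun s => ((s, z s) : ℝ × E)) =O[𝓝 0] fun s => s :=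
    (isBigO_refl _ _).prod_left (isBigO_id_of_sub_smul hz)
  have hq0 : Tendsto (fun s => ((s, z s) : ℝ × E)) (𝓝 0) (𝓝 0) := hq.trans_tendsto tendsto_id
  have hrem := (hf.isBigO_sub_sub_fderiv.comp_tendsto hq0).trans (hq.norm_left.pow 2)
  have hlin : (fun s => D ((0 : ℝ), z s - s • v)) =O[𝓝 0] fun s => s ^ 2 :=
    ((D.comp (ContinuousLinearMap.inr ℝ ℝ E)).isBigO_comp _ _).trans hz
  refine (hrem.add hlin).congr_left fun s => ?_
  have hsplit : ((s, z s) : ℝ × E) = s • (1, v) + (0, z s - s • v) := by ext <;> simp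
  simp only [Function.comp_apply, hsplit, map_add, map_smul]
  simp only [Function.uncurry, Prod.smul_mk, smul_eq_mul, mul_one, Prod.mk_add_mk, add_zero,
    add_sub_cancel]
  abel

theorem isBigO_sub_taylor_two_of_ode {f : ℝ → E → E} {y : ℝ → E} {t : ℝ}
    (hf : ContDiffAt ℝ 2 (Function.uncurry f) (t, y t))
    (hy : ∀ᶠ s in 𝓝 t, HasDerivAt y (f s (y s)) s) :
    (fun s => y (t + s) - (y t + s • f t (y t) +
        (s ^ 2 / 2) • fderiv ℝ (Function.uncurry f) (t, y t) (1, f t (y t))))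
      =O[𝓝 0] fun s => s ^ 3 := by
  set F := f t (y t)
  set w := fderiv ℝ (Function.uncurry f) (t, y t) (1, F)
  have hshift : Tendsto (fun s : ℝ => t + s) (𝓝 0) (𝓝 t) := by
    simpa using tendsto_const_nhds.add (tendsto_id (x := 𝓝 (0 : ℝ)))
  have hy' : ∀ᶠ s in 𝓝 (0 : ℝ), HasDerivAt (fun s => y (t + s)) (f (t + s) (y (t + s))) s :=
    (hshift.eventually hy).mono fun s hs => hs.comp_const_add t s
  have hG : DifferentiableAt ℝ (Function.uncurry f ∘ fun s => (s, y s)) t :=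
    (hf.differentiableAt (by norm_num)).comp t
      (differentiableAt_id.prodMk hy.self_of_nhds.differentiableAt)
  have hfirst : (fun s => y (t + s) - y t - s • F) =O[𝓝 0] fun s => s ^ 2 := by
    have hd : (fun s => f (t + s) (y (t + s)) - F) =O[𝓝 0] fun s => s ^ 1 := by
      simpa [Function.comp_def] using hG.isBigO_sub.comp_tendsto hshift
    refine (isBigO_pow_succ_of_hasDerivAt (φ := fun s => y (t + s) - s • F)
      (hy'.mono fun s hs => by simpa using hs.fun_sub ((hasDerivAt_id s).smul_const F)) hd).congr_left
      fun s => ?_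
    simp only [add_zero, zero_smul, sub_zero]
    abel
  have hsecond : (fun s => f (t + s) (y (t + s)) - F - s • w) =O[𝓝 0] fun s => s ^ 2 := by
    simpa using hf.isBigO_sub_sub_fderiv_along hfirst
  refine (isBigO_pow_succ_of_hasDerivAt (φ := fun s => y (t + s) - s • F - (s ^ 2 / 2) • w)
    (hy'.mono fun s hs => ?_) hsecond).congr_left fun s => ?_
  · convert (hs.fun_sub ((hasDerivAt_id s).smul_const F)).fun_sub
      (((hasDerivAt_pow 2 s).div_const 2).smul_const w) using 1
    simp only [id_eq]
    module
  · simp only [add_zero, zero_smul, sub_zero, ne_eq, OfNat.ofNat_ne_zero, not_false_eq_true,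
      zero_pow, zero_div]
    abel

end NormedSpace

section Resolvent

variable {n : Type*} [Fintype n] [DecidableEq n]

omit [DecidableEq n] in
theorem Matrix.isBigO_mulVec {α : Type*} {l : Filter α} (A : Matrix n n ℝ) (X : α → n → ℝ) :
    (fun x => A *ᵥ X x) =O[l] X :=
  (LinearMap.toContinuousLinearMap (Matrix.mulVecLin A)).isBigO_comp X l

theorem Matrix.isBigO_inv_one_sub_smul_mulVec_sub (A : Matrix n n ℝ) {u : ℝ → n → ℝ}
    {u₀ u₁ : n → ℝ} (hu : (fun h => u h - (u₀ + h • u₁)) =O[𝓝 0] fun h => h ^ 2) :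
    (fun h => (1 - h • A)⁻¹ *ᵥ u h - (u₀ + h • (u₁ + A *ᵥ u₀))) =O[𝓝 0] fun h => h ^ 2 := by
  set k := fun h : ℝ => (1 - h • A)⁻¹ *ᵥ u h
  have hB : Continuous fun h : ℝ => (1 : Matrix n n ℝ) - h • A := by fun_prop
  have hdet : ∀ᶠ h in 𝓝 (0 : ℝ), IsUnit (1 - h • A).det := by
    have h0 : (1 - (0 : ℝ) • A).det ≠ 0 := by simp
    exact (hB.matrix_det.continuousAt.eventually_ne h0).mono fun h hh => isUnit_iff_ne_zero.2 hh
  have hfix : ∀ᶠ h in 𝓝 (0 : ℝ), k h = u h + h • A *ᵥ k h := by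
    filter_upwards [hdet] with h hh
    have hk : (1 - h • A) *ᵥ k h = u h := by simp [k, mulVec_mulVec, mul_nonsing_inv _ hh]
    rw [sub_mulVec, one_mulVec, smul_mulVec] at hk
    rw [← hk]
    abel
  have hinv : Tendsto (fun h : ℝ => (1 - h • A)⁻¹) (𝓝 0) (𝓝 1) := by
    have hc : ContinuousAt Ring.inverse (1 - (0 : ℝ) • A).det := by
      simp [Ring.inverse_eq_inv']
    simpa [Function.comp_def] using
      ((continuousAt_matrix_inv _ hc).comp (f := fun h : ℝ => 1 - h • A) hB.continuousAt).tendsto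
  have hu₀ : (fun h => u h - u₀) =O[𝓝 0] fun h => h :=
    isBigO_id_of_sub_smul (by simpa [sub_add_eq_sub_sub] using hu)
  have hk : Tendsto k (𝓝 0) (𝓝 u₀) := by
    have hu : Tendsto u (𝓝 0) (𝓝 u₀) := tendsto_sub_nhds_zero_iff.1 (hu₀.trans_tendsto tendsto_id)
    simpa [Function.comp_def] using
      (continuous_fst.matrix_mulVec continuous_snd).continuousAt.tendsto.comp
        (hinv.prodMk_nhds hu)
  have hk₀ : (fun h => k h - u₀) =O[𝓝 0] fun h => h := by
    have hAk := ((A.isBigO_mulVec k).trans (hk.isBigO_one ℝ)).id_smul_pow_succ (m := 0)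
    refine (hu₀.add (by simpa using hAk)).congr' (hfix.mono fun h hh => ?_) .rfl
    simp only
    conv_rhs => rw [hh]
    abel
  have hAk₀ : (fun h => h • A *ᵥ (k h - u₀)) =O[𝓝 0] fun h => h ^ 2 :=
    IsBigO.id_smul_pow_succ (by simpa using (A.isBigO_mulVec _).trans hk₀)
  refine (hu.add hAk₀).congr' (hfix.mono fun h hh => ?_) .rfl
  change _ = k h - _
  conv_rhs => rw [hh]
  simp only [mulVec_sub]
  module

end Resolvent

/-- The two-stage Rosenbrock scheme ROS2 is second-order consistent for any `Â`:
the local error is `O(Δt³)` as `Δt → 0⁺`. -/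
theorem ros2_second_order_consistent {N : ℕ}
    (f : ℝ → (Fin N → ℝ) → Fin N → ℝ)
    (hf : ContDiff ℝ 3 (Function.uncurry f))
    (Ahat : Matrix (Fin N) (Fin N) ℝ) (γ : ℝ)
    (tn : ℝ) (y : ℝ → Fin N → ℝ)
    (hy : ∀ t : ℝ, HasDerivAt y (f t (y t)) t) :
    (fun Δt : ℝ =>
      let k1 := ((1 : Matrix (Fin N) (Fin N) ℝ) - (γ * Δt) • Ahat)⁻¹.mulVec (f tn (y tn))
      let k2 := ((1 : Matrix (Fin N) (Fin N) ℝ) - (γ * Δt) • Ahat)⁻¹.mulVec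
        (f (tn + Δt) (y tn + Δt • k1) - (2 : ℝ) • k1)
      y (tn + Δt) - (y tn + (3 / 2 * Δt) • k1 + (1 / 2 * Δt) • k2))
      =O[nhdsWithin 0 (Set.Ioi 0)] fun Δt : ℝ => Δt ^ 3 := by
  set F := f tn (y tn)
  set w := fderiv ℝ (Function.uncurry f) (tn, y tn) (1, F)
  set A := γ • Ahat
  set k₁ : ℝ → Fin N → ℝ := fun Δt => (1 - Δt • A)⁻¹ *ᵥ F
  have hA : ∀ Δt : ℝ, (γ * Δt) • Ahat = Δt • A := fun Δt => by rw [mul_comm, mul_smul]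
  have hf₂ : ContDiffAt ℝ 2 (Function.uncurry f) (tn, y tn) := hf.contDiffAt.of_le (by norm_num)
  have hexact := isBigO_sub_taylor_two_of_ode hf₂ (.of_forall hy)
  have hk₁ : (fun Δt => k₁ Δt - (F + Δt • (0 + A *ᵥ F))) =O[𝓝 0] fun Δt => Δt ^ 2 :=
    A.isBigO_inv_one_sub_smul_mulVec_sub (u := fun _ => F)
      ((isBigO_zero _ _).congr_left fun Δt => by simp)
  have hstage : (fun Δt => f (tn + Δt) (y tn + Δt • k₁ Δt) - F - Δt • w)
      =O[𝓝 0] fun Δt => Δt ^ 2 := by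
    have hk₁F : (fun Δt => k₁ Δt - F) =O[𝓝 0] fun Δt => Δt ^ 1 := by
      simpa using isBigO_id_of_sub_smul (X := fun Δt => k₁ Δt - F)
        (hk₁.congr_left fun Δt => by abel)
    exact hf₂.isBigO_sub_sub_fderiv_along (by simpa [smul_sub] using hk₁F.id_smul_pow_succ)
  have hk₂ := A.isBigO_inv_one_sub_smul_mulVec_sub
    (u := fun Δt => f (tn + Δt) (y tn + Δt • k₁ Δt) - (2 : ℝ) • k₁ Δt) (u₀ := -F)
    (u₁ := w - (2 : ℝ) • A *ᵥ F)
    ((hstage.sub (hk₁.const_smul_left (2 : ℝ))).congr_left fun Δt => by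
      simp only [Pi.smul_apply]
      module)
  refine IsBigO.mono ?_ nhdsWithin_le_nhds
  simp only [hA]
  refine (hexact.sub ((hk₁.id_smul_pow_succ.const_smul_left (3 / 2 : ℝ)).add
    (hk₂.id_smul_pow_succ.const_smul_left (1 / 2 : ℝ)))).congr_left fun Δt => ?_
  simp only [Pi.smul_apply, Matrix.mulVec_neg]
  module
end

section
/- If A V_k = V_{k+1} H̄_k is an Arnoldi decomposition (H̄_k ∈ ℝ^{(k+1)×k} upper Hessenberg, V_{k+1} orthonormal columns), then the residual of the Krylov approximation to y' = −Ay + g, y(0)=0 with y_k(t) = V_k u(t), u' = −H_k u + βe₁, u(0)=0, satisfies r_k(t) = −h_{k+1,k} [u(t)]_k · v_{k+1}, so ‖r_k(t)‖ = h_{k+1,k} |[u(t)]_k|, computable from the small problem alone. -/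
/-!
By the Arnoldi relation, `A V_k u = V_k H_k u + h_{k+1,k} [u]_k v_{k+1}`, so in the residual the
`V_k H_k u` terms cancel, and `V_k (β e₁) = g` cancels `g`; only `-h_{k+1,k} [u]_k v_{k+1}` is
left, whose norm is `h_{k+1,k} |[u]_k|` because `‖v_{k+1}‖ = 1`.
-/

open scoped Matrix

noncomputable def euclidNorm {N : ℕ} (v : Fin N → ℝ) : ℝ :=
  ‖(WithLp.equiv 2 (Fin N → ℝ)).symm v‖

namespace Matrix

variable {m n R : Type*} [Fintype n] [DecidableEq n]

theorem vecMulVec_single_one_mulVec [CommSemiring R] (v : m → R) (j : n) (u : n → R) :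
    vecMulVec v (Pi.single j 1) *ᵥ u = u j • v := by
  ext i
  simp [vecMulVec_mulVec, mul_comm]

theorem mulVec_smul_single_one_of_col_eq_div [Field R] {V : Matrix m n R} {g : m → R} {c : R}
    {j : n} (hg : c = 0 → g = 0) (hcol : ∀ i, V i j = g i / c) :
    V *ᵥ (c • Pi.single j 1) = g := by
  ext i
  rw [mulVec_smul, mulVec_single_one, Pi.smul_apply, col_apply, hcol, smul_eq_mul, mul_div_assoc',
    mul_div_cancel_left_of_imp fun hc => congrFun (hg hc) i]

theorem arnoldi_residual_eq [Fintype m] [CommRing R] {A : Matrix m m R} {V : Matrix m n R}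
    {H : Matrix n n R} {h : R} {w : m → R} {j : n}
    (hArn : A * V = V * H + h • vecMulVec w (Pi.single j 1)) {g : m → R} {b : n → R}
    (hb : V *ᵥ b = g) (u : n → R) :
    -(A *ᵥ (V *ᵥ u)) + g - V *ᵥ (-(H *ᵥ u) + b) = (-(h * u j)) • w := by
  rw [mulVec_mulVec, hArn, add_mulVec, smul_mulVec, vecMulVec_single_one_mulVec, mulVec_add,
    hb, mulVec_neg, mulVec_mulVec, smul_smul, neg_smul]
  abel

end Matrix

theorem euclidNorm_eq_zero {N : ℕ} {v : Fin N → ℝ} (hv : euclidNorm v = 0) : v = 0 := by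
  simpa [euclidNorm] using hv

theorem euclidNorm_smul {N : ℕ} (c : ℝ) (v : Fin N → ℝ) :
    euclidNorm (c • v) = |c| * euclidNorm v :=
  norm_smul c ((WithLp.equiv 2 (Fin N → ℝ)).symm v)

theorem arnoldi_residual_formula_general {N k : ℕ}
    (A : Matrix (Fin N) (Fin N) ℝ)
    (Vk : Matrix (Fin N) (Fin (k + 1)) ℝ)
    (Hk : Matrix (Fin (k + 1)) (Fin (k + 1)) ℝ)
    (h : ℝ) (hh : 0 ≤ h) (vnext : Fin N → ℝ)
    (g : Fin N → ℝ)
    (hArn : A * Vk = Vk * Hk +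
      h • Matrix.vecMulVec vnext (Pi.single (Fin.last k) (1 : ℝ)))
    (hvnorm : euclidNorm vnext = 1)
    (hcol : ∀ i : Fin N, Vk i 0 = g i / euclidNorm g)
    (u : ℝ → Fin (k + 1) → ℝ)
    (rk : ℝ → Fin N → ℝ)
    (hrk : ∀ t : ℝ, rk t = -(A.mulVec (Vk.mulVec (u t))) + g -
      Vk.mulVec (-(Hk.mulVec (u t)) +
        euclidNorm g • (Pi.single (0 : Fin (k + 1)) (1 : ℝ) : Fin (k + 1) → ℝ))) :
    ∀ t : ℝ, rk t = (-(h * u t (Fin.last k))) • vnext ∧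
      euclidNorm (rk t) = h * |u t (Fin.last k)| := by
  intro t
  have hrk_eq : rk t = (-(h * u t (Fin.last k))) • vnext := by
    rw [hrk t]
    exact Matrix.arnoldi_residual_eq hArn
      (Matrix.mulVec_smul_single_one_of_col_eq_div euclidNorm_eq_zero hcol) (u t)
  refine ⟨hrk_eq, ?_⟩
  rw [hrk_eq, euclidNorm_smul, hvnorm, mul_one, abs_neg, abs_mul, abs_of_nonneg hh]

/-- With an Arnoldi decomposition `A V_k = V_k H_k + h_{k+1,k} v_{k+1} e_kᵀ`, the residual
of the Krylov approximation to `y' = −Ay + g`, `y(0) = 0` equals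
`r_k(t) = −h_{k+1,k}[u(t)]_k v_{k+1}`, with norm `h_{k+1,k}|[u(t)]_k|`. -/
theorem arnoldi_residual_formula {N k : ℕ}
    (A : Matrix (Fin N) (Fin N) ℝ)
    (Vk : Matrix (Fin N) (Fin (k + 1)) ℝ)
    (Hk : Matrix (Fin (k + 1)) (Fin (k + 1)) ℝ)
    (h : ℝ) (hh : 0 ≤ h) (vnext : Fin N → ℝ)
    (g : Fin N → ℝ) (hg : g ≠ 0)
    (hArn : A * Vk = Vk * Hk +
      h • Matrix.vecMulVec vnext (Pi.single (Fin.last k) (1 : ℝ)))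
    (horth : Vkᵀ * Vk = 1)
    (hVv : Vkᵀ.mulVec vnext = 0) (hvnorm : euclidNorm vnext = 1)
    (hcol : ∀ i : Fin N, Vk i 0 = g i / euclidNorm g)
    (hHk : Hk = Vkᵀ * A * Vk)
    (u : ℝ → Fin (k + 1) → ℝ)
    (hu : ∀ t : ℝ, HasDerivAt u
      (-(Hk.mulVec (u t)) + euclidNorm g • (Pi.single (0 : Fin (k + 1)) (1 : ℝ) : Fin (k + 1) → ℝ)) t)
    (hu0 : u 0 = 0)
    (rk : ℝ → Fin N → ℝ)
    (hrk : ∀ t : ℝ, rk t = -(A.mulVec (Vk.mulVec (u t))) + g -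
      Vk.mulVec (-(Hk.mulVec (u t)) +
        euclidNorm g • (Pi.single (0 : Fin (k + 1)) (1 : ℝ) : Fin (k + 1) → ℝ))) :
    ∀ t : ℝ, rk t = (-(h * u t (Fin.last k))) • vnext ∧
      euclidNorm (rk t) = h * |u t (Fin.last k)| :=
  arnoldi_residual_formula_general A Vk Hk h hh vnext g hArn hvnorm hcol u rk hrk
end
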